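/- arXiv:2008.06026 — 5 statements merged into one kernel-verified Lean document; each statement's English description precedes it below -/
import Mathlib

section
/- If S ⊆ ℝ³ is an objective atomic structure (i.e., for each i there exists an orthogonal Qᵢ with {Qᵢ(xⱼ − x₁) + xᵢ : j} = S), then S equals the orbit of the point x₁ under the isometry group of S (the group of all isometries g with g(S) = S). -/
noncomputable section

abbrev E3 := EuclideanSpace ℝ (Fin 3)

section

variable {E : Type*} [SeminormedAddCommGroup E] [NormedSpace ℝ E]

def LinearIsometryEquiv.recenter (Q : E ≃ₗᵢ[ℝ] E) (a b : E) : E ≃ᵢ E :=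
  ((IsometryEquiv.subRight a).trans Q.toIsometryEquiv).trans (IsometryEquiv.addRight b)

@[simp]
theorem LinearIsometryEquiv.recenter_apply (Q : E ≃ₗᵢ[ℝ] E) (a b y : E) :
    Q.recenter a b y = Q (y - a) + b :=
  rfl

end

theorem IsometryEquiv.orbit_subset_of_mem {P : Type*} [PseudoEMetricSpace P] {S : Set P}
    {a : P} (ha : a ∈ S) : {y | ∃ g : P ≃ᵢ P, g '' S = S ∧ g a = y} ⊆ S := by
  rintro _ ⟨g, hg, rfl⟩
  rw [← hg]
  exact Set.mem_image_of_mem g ha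

/-- If `S ⊆ ℝ³` is an objective atomic structure (for each `x ∈ S` there is an
orthogonal `Q` with `{Q(y − x₁) + x : y ∈ S} = S`), then `S` equals the orbit
of `x₁` under the isometry group of `S` (all isometries `g` with `g(S) = S`). -/
theorem objective_structure_eq_orbit (S : Set E3) (x₁ : E3) (hx₁ : x₁ ∈ S)
    (hobj : ∀ x ∈ S, ∃ Q : E3 ≃ₗᵢ[ℝ] E3, (fun y => Q (y - x₁) + x) '' S = S) :
    S = {y : E3 | ∃ g : E3 ≃ᵢ E3, g '' S = S ∧ g x₁ = y} := by
  refine subset_antisymm (fun x hx => ?_) (IsometryEquiv.orbit_subset_of_mem hx₁)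
  obtain ⟨Q, hQ⟩ := hobj x hx
  exact ⟨Q.recenter x₁ x, hQ, by simp⟩
end
end

section
/- Let G be a group of isometries of ℝ³ and suppose the orbit S = G·x₁ of a point x₁ is discrete (has no accumulation points) and G is not discrete. Then for every x ∈ S, the stabilizer subgroup G_x = {g ∈ G : g(x) = x} is infinite. -/
open Filter

noncomputable section

/-- If the orbit `S = G·x₁` of a point under a group `G` of isometries of ℝ³ is
discrete (no accumulation points) while `G` is not discrete (there is a point `y`
and infinitely many elements of `G` whose distinct images of `y` converge), then
for every `x ∈ S` the stabilizer `{g ∈ G : g x = x}` is infinite. -/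
theorem stabilizer_infinite_of_nondiscrete_group
    (G : Subgroup (E3 ≃ᵢ E3)) (x₁ : E3)
    (S : Set E3) (hS : S = {y : E3 | ∃ g ∈ G, g x₁ = y})
    (hdisc : ∀ z : E3, ¬ AccPt z (𝓟 S))
    (hnondisc : ∃ (y : E3) (g : ℕ → E3 ≃ᵢ E3) (z : E3),
      (∀ i, g i ∈ G) ∧ Function.Injective (fun i => g i y) ∧
      Tendsto (fun i => g i y) atTop (nhds z)) :
    ∀ x ∈ S, Set.Infinite {g : E3 ≃ᵢ E3 | g ∈ G ∧ g x = x} := by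
  intro x hx
  obtain ⟨y, g, z, hgG, hinj, htend⟩ := hnondisc
  obtain ⟨h, hhG, hhx⟩ := hS ▸ hx
  -- the points `g i x` lie in `S`
  have hgxS : ∀ i, g i x ∈ S := by
    intro i
    rw [hS]
    exact ⟨g i * h, G.mul_mem (hgG i) hhG, by simp [IsometryEquiv.mul_apply, hhx]⟩
  -- the points `g i x` are bounded
  obtain ⟨C, hC⟩ := (Metric.isBounded_iff_subset_closedBall z).1
    (Metric.isBounded_range_of_tendsto _ htend)
  have hball : ∀ i, g i x ∈ Metric.closedBall z (C + dist x y) := by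
    intro i
    have h1 : dist (g i y) z ≤ C := hC (Set.mem_range_self i)
    have h2 : dist (g i x) (g i y) = dist x y := (g i).isometry.dist_eq x y
    have := dist_triangle (g i x) (g i y) z
    simp only [Metric.mem_closedBall]
    linarith
  -- so the set `{g i x : i}` is finite
  have hfin : (Set.range fun i => g i x).Finite := by
    by_contra hinf
    replace hinf : (Set.range fun i => g i x).Infinite := hinf
    obtain ⟨w, -, hw⟩ := hinf.exists_accPt_of_subset_isCompact
      (isCompact_closedBall z (C + dist x y))
      (Set.range_subset_iff.2 hball)
    exact hdisc w (hw.mono (principal_mono.2 (Set.range_subset_iff.2 hgxS)))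
  -- pigeonhole: some value `p` is attained for infinitely many `i`
  have hfiber : ∃ p, {i : ℕ | g i x = p}.Infinite := by
    by_contra hcon
    push_neg at hcon
    have : (Set.univ : Set ℕ).Finite := by
      have : (Set.univ : Set ℕ) ⊆ ⋃ p ∈ Set.range fun i => g i x, {i : ℕ | g i x = p} := by
        intro i _
        simp only [Set.mem_iUnion]
        exact ⟨g i x, Set.mem_range_self i, rfl⟩
      exact Set.Finite.subset (hfin.biUnion fun p _ => hcon p) this
    exact Set.infinite_univ this
  obtain ⟨p, hp⟩ := hfiber
  obtain ⟨i₀, hi₀⟩ := hp.nonempty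
  -- map each `i` in the fiber to `(g i₀)⁻¹ * g i`, which stabilizes `x`
  have key : ∀ i ∈ {i : ℕ | g i x = p}, ((g i₀)⁻¹ * g i) ∈ {g : E3 ≃ᵢ E3 | g ∈ G ∧ g x = x} := by
    intro i hi
    simp only [Set.mem_setOf_eq] at hi
    refine ⟨G.mul_mem (G.inv_mem (hgG i₀)) (hgG i), ?_⟩
    have : (g i₀)⁻¹ p = x := by
      rw [← hi₀]
      exact (g i₀).symm_apply_apply x
    simpa [IsometryEquiv.mul_apply, hi] using this
  have hinj2 : Function.Injective fun i : {i : ℕ | g i x = p} => (g i₀)⁻¹ * g (i : ℕ) := by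
    intro i j hij
    have : g (i : ℕ) = g (j : ℕ) := by
      have := congrArg (fun e => g i₀ * e) hij
      simpa [← mul_assoc] using this
    have : g (i : ℕ) y = g (j : ℕ) y := by rw [this]
    exact Subtype.ext (hinj this)
  have : Infinite {i : ℕ | g i x = p} := hp.to_subtype
  exact Set.infinite_of_injective_forall_mem hinj2 fun i => key i i.2
end
end

section
/- Let G be a group of isometries of ℝ³, x ∈ ℝ³, and suppose the stabilizer G_x is infinite and the orbit S = G·x is discrete and contains a point x' ≠ x. Then there exist infinitely many distinct elements of G_x that also fix some point x'' ∈ S with x'' ≠ x; consequently all points of S lie on the line through x and x''. -/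
/-!
Since `S` is discrete, it meets every sphere about `x` in a finite set. The orbit of `x'` under
`G_x` lies in such a sphere, so it is finite and the stabilizer of `x'` in `G_x` is infinite. If
some `z ∈ S` were off the line through `x` and `x'`, the same argument would give infinitely many
isometries fixing the non-collinear points `x, x', z`; but these fix a plane pointwise, so each
is the identity or the reflection in that plane.
-/

open Filter

noncomputable section

open MulAction Module Set

instance IsometryEquiv.applyMulAction {α : Type*} [PseudoEMetricSpace α] :
    MulAction (α ≃ᵢ α) α where
  smul g x := g x
  one_smul _ := rfl
  mul_smul _ _ _ := rfl

@[simp]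
theorem IsometryEquiv.smul_def {α : Type*} [PseudoEMetricSpace α] (g : α ≃ᵢ α) (x : α) :
    g • x = g x :=
  rfl

theorem finite_inter_of_isCompact_of_forall_not_accPt {X : Type*} [TopologicalSpace X]
    {S K : Set X} (hS : ∀ z, ¬AccPt z (𝓟 S)) (hK : IsCompact K) : (S ∩ K).Finite := by
  by_contra h
  obtain ⟨z, -, hz⟩ := Set.Infinite.exists_accPt_of_subset_isCompact h hK inter_subset_right
  exact hS z (hz.mono (principal_mono.2 inter_subset_left))

/-- Each fibre `{g ∈ H | g • z = w}` is empty or a left coset of `H ⊓ stabilizer G z`. -/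
theorem Subgroup.infinite_inf_stabilizer_of_mapsTo_finite {G X : Type*} [Group G]
    [MulAction G X] {H : Subgroup G} (hH : (H : Set G).Infinite) {z : X} {T : Set X}
    (hT : T.Finite) (hzT : MapsTo (· • z) (H : Set G) T) :
    ((H ⊓ stabilizer G z : Subgroup G) : Set G).Infinite := by
  intro hfin
  have hfibre (w : X) : {g ∈ (H : Set G) | g • z = w}.Finite := by
    rcases eq_empty_or_nonempty {g ∈ (H : Set G) | g • z = w} with h | ⟨g₀, hg₀H, hg₀z⟩
    · exact h ▸ finite_empty
    refine (hfin.image (g₀ * ·)).subset ?_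
    rintro g ⟨hgH, hgz⟩
    refine ⟨g₀⁻¹ * g, ⟨H.mul_mem (H.inv_mem hg₀H) hgH, ?_⟩, by simp⟩
    change (g₀⁻¹ * g) • z = z
    rw [mul_smul, hgz, ← hg₀z, inv_smul_smul]
  exact hH <| (hT.biUnion fun w _ => hfibre w).subset fun g hg =>
    mem_biUnion (hzT hg) ⟨hg, rfl⟩

theorem infinite_inf_stabilizer_of_forall_not_accPt {X : Type*} [PseudoMetricSpace X]
    [ProperSpace X] {H : Subgroup (X ≃ᵢ X)} (hH : (H : Set (X ≃ᵢ X)).Infinite) {x : X}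
    (hHx : H ≤ stabilizer (X ≃ᵢ X) x) {S : Set X} (hHS : ∀ g ∈ H, ∀ y ∈ S, g y ∈ S)
    (hS : ∀ z, ¬AccPt z (𝓟 S)) {z : X} (hz : z ∈ S) :
    ((H ⊓ stabilizer (X ≃ᵢ X) z : Subgroup (X ≃ᵢ X)) : Set (X ≃ᵢ X)).Infinite := by
  refine H.infinite_inf_stabilizer_of_mapsTo_finite hH
    (finite_inter_of_isCompact_of_forall_not_accPt hS (isCompact_sphere x (dist z x)))
    fun g hg => ⟨hHS g hg z hz, ?_⟩
  have hgx : g x = x := hHx hg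
  simpa [hgx] using g.dist_eq z x

section Euclidean

variable {V P : Type*} [NormedAddCommGroup V] [InnerProductSpace ℝ V] [MetricSpace P]
  [NormedAddTorsor V P]

/-- A linear isometry fixing `K` preserves the line `Kᗮ`, so it acts there as `±1`. -/
theorem Submodule.finite_setOf_linearIsometryEquiv_fixing (K : Submodule ℝ V)
    [K.HasOrthogonalProjection] (hK : finrank ℝ Kᗮ = 1) :
    {L : V ≃ₗᵢ[ℝ] V | ∀ v ∈ K, L v = v}.Finite := by
  obtain ⟨w, hw0, hw⟩ := finrank_eq_one_iff'.1 hK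
  have hLw_mem : ∀ L : V ≃ₗᵢ[ℝ] V, (∀ v ∈ K, L v = v) → L w ∈ Kᗮ := fun L hL u hu => by
    rw [← hL u hu, L.inner_map_map]
    exact (K.mem_orthogonal _).1 w.2 u hu
  have hLw : ∀ L : V ≃ₗᵢ[ℝ] V, (∀ v ∈ K, L v = v) → L w = w ∨ L w = -w := by
    intro L hL
    obtain ⟨c, hc⟩ := hw ⟨L w, hLw_mem L hL⟩
    have hLc : L w = c • (w : V) := congrArg Subtype.val hc.symm
    have hc1 : |c| = 1 := by
      have := L.norm_map w
      rw [hLc, norm_smul, Real.norm_eq_abs] at this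
      exact (mul_eq_right₀ (norm_ne_zero_iff.2 (by simpa using hw0))).1 this
    rcases abs_eq zero_le_one |>.1 hc1 with rfl | rfl <;> simp [hLc]
  refine Finite.of_injOn (f := fun L : V ≃ₗᵢ[ℝ] V => L w) (t := ({(w : V), -(w : V)} : Set V))
    (fun L hL => hLw L hL) (fun L₁ hL₁ L₂ hL₂ h => ?_) (by simp)
  ext y
  obtain ⟨k, hk, u, hu, rfl⟩ := K.exists_add_mem_mem_orthogonal y
  obtain ⟨c, hc⟩ := hw ⟨u, hu⟩
  have hu' : u = c • (w : V) := congrArg Subtype.val hc.symm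
  simp only at h
  simp [hu', hL₁ k hk, hL₂ k hk, h]

theorem finite_setOf_isometryEquiv_fixing_of_finrank_vectorSpan [FiniteDimensional ℝ V]
    {s : Set P} {x : P} (hx : x ∈ s) (hs : finrank ℝ (vectorSpan ℝ s) + 1 = finrank ℝ V) :
    {g : P ≃ᵢ P | ∀ p ∈ s, g p = p}.Finite := by
  let φ (g : P ≃ᵢ P) : V ≃ₗᵢ[ℝ] V := g.toRealAffineIsometryEquiv.linearIsometryEquiv
  have hφ (g : P ≃ᵢ P) (p q : P) : φ g (p -ᵥ q) = g p -ᵥ g q :=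
    g.toRealAffineIsometryEquiv.map_vsub p q
  refine Finite.of_injOn (f := φ) ?_ ?_
    ((vectorSpan ℝ s).finite_setOf_linearIsometryEquiv_fixing
      (Submodule.finrank_add_finrank_orthogonal' hs))
  · intro g hg v hv
    rw [vectorSpan_eq_span_vsub_set_right ℝ hx] at hv
    refine LinearMap.eqOn_span' (f := (φ g : V →ₗ[ℝ] V)) (g := LinearMap.id) ?_ hv
    rintro _ ⟨p, hp, rfl⟩
    simp [hφ, hg p hp, hg x hx]
  · intro g₁ hg₁ g₂ hg₂ h
    ext p
    rw [← vsub_vadd (g₁ p) x, ← vsub_vadd (g₂ p) x, ← hg₁ x hx, ← hφ, h, hφ, hg₁ x hx, hg₂ x hx]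

end Euclidean

theorem finrank_vectorSpan_eq_two_of_not_collinear {k V P : Type*} [DivisionRing k]
    [AddCommGroup V] [Module k V] [AddTorsor V P] {p₁ p₂ p₃ : P}
    (h : ¬Collinear k {p₁, p₂, p₃}) : finrank k (vectorSpan k {p₁, p₂, p₃}) = 2 := by
  have := (affineIndependent_iff_not_collinear_set.2 h).finrank_vectorSpan (n := 2) (by simp)
  rwa [Matrix.range_cons, Matrix.range_cons_cons_empty, singleton_union] at this

/-- If the stabilizer of `x` in a group `G` of isometries of ℝ³ is infinite, the
orbit `S = G·x` is discrete and contains a point `x' ≠ x`, then infinitely many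
elements of the stabilizer of `x` also fix some `x'' ∈ S` with `x'' ≠ x`, and
consequently all points of `S` lie on the line through `x` and `x''`. -/
theorem stabilizer_fixes_second_point_and_collinear
    (G : Subgroup (E3 ≃ᵢ E3)) (x x' : E3)
    (S : Set E3) (hS : S = {y : E3 | ∃ g ∈ G, g x = y})
    (hstab : Set.Infinite {g : E3 ≃ᵢ E3 | g ∈ G ∧ g x = x})
    (hdisc : ∀ z : E3, ¬ AccPt z (𝓟 S))
    (hx' : x' ∈ S) (hne : x' ≠ x) :
    ∃ x'' ∈ S, x'' ≠ x ∧
      Set.Infinite {g : E3 ≃ᵢ E3 | g ∈ G ∧ g x = x ∧ g x'' = x''} ∧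
      ∀ z ∈ S, ∃ lam : ℝ, z = x + lam • (x'' - x) := by
  have hGS : ∀ g ∈ G, ∀ y ∈ S, g y ∈ S := by
    subst hS
    rintro g hg _ ⟨h, hh, rfl⟩
    exact ⟨g * h, G.mul_mem hg hh, rfl⟩
  have hxx' := infinite_inf_stabilizer_of_forall_not_accPt (H := G ⊓ stabilizer _ x) hstab
    inf_le_right (fun g hg => hGS g hg.1) hdisc hx'
  refine ⟨x', hx', hne, hxx'.mono ?_, fun z hz => ?_⟩
  · rintro g ⟨⟨hG, hgx⟩, hgx'⟩
    exact ⟨hG, hgx, hgx'⟩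
  have hcol : Collinear ℝ {x, x', z} := by
    by_contra hnc
    refine infinite_inf_stabilizer_of_forall_not_accPt hxx' (inf_le_left.trans inf_le_right)
      (fun g hg => hGS g hg.1.1) hdisc hz ?_
    refine (finite_setOf_isometryEquiv_fixing_of_finrank_vectorSpan (s := {x, x', z})
      (mem_insert x _) (by simp [finrank_vectorSpan_eq_two_of_not_collinear hnc])).subset ?_
    rintro g ⟨⟨⟨-, hgx : g x = x⟩, hgx' : g x' = x'⟩, hgz : g z = z⟩
    simp [hgx, hgx', hgz]
  obtain ⟨r, hr⟩ := mem_affineSpan_pair_iff_exists_lineMap_eq.1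
    (hcol.mem_affineSpan_of_mem_of_ne (p₃ := z) (by simp) (by simp) (by simp) hne.symm)
  exact ⟨r, by rw [← hr, AffineMap.lineMap_apply]; simp [add_comm]⟩
end
end

section
/- If a discrete subset S of ℝ³ is the orbit of a point under a non-discrete group of isometries, then S is one of: a single point, a pair of points, a periodic line of points {i·e + c : i ∈ ℤ} for some nonzero vector e, or a union of two interleaved periodic lines {i·e + c : i ∈ ℤ} ∪ {(i+λ)·e + c : i ∈ ℤ} with λ ∉ ℤ. -/
open Filter

noncomputable section

/-!
The points `g i y` are infinitely many and bounded. The orbit `S` of `x₁` is closed and discrete,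
so infinitely many `g i` send `x₁` to the same point, and the stabilizer of `x₁` still has an
infinite orbit through `y`. If `x₁, s, t ∈ S` were not collinear, the stabilizer could send
`(s, t)` to only finitely many pairs of points of `S`, and stabilizer elements agreeing on
`x₁, s, t` send `y` to points with the same distances to `x₁, s, t`, of which ℝ³ has at most two.
So `S` lies on a line, on which `G` acts by translations `t ↦ a + t` and reflections `t ↦ r - t`.
The translation lengths form a non-dense, hence cyclic, subgroup `ℤα` of ℝ, and the reflection
centres are empty or a coset of it; this gives the four cases.
-/

open Set Module Metric Bornology AffineMap

section Orbits

variable {X : Type*} [MetricSpace X]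

def isometryOrbit (G : Subgroup (X ≃ᵢ X)) (x : X) : Set X := {y | ∃ g ∈ G, g x = y}

def isometryStabilizer (G : Subgroup (X ≃ᵢ X)) (x : X) : Subgroup (X ≃ᵢ X) where
  carrier := {g | g ∈ G ∧ g x = x}
  one_mem' := ⟨G.one_mem, rfl⟩
  mul_mem' := fun ⟨hg, hgx⟩ ⟨hh, hhx⟩ =>
    ⟨G.mul_mem hg hh, by rw [IsometryEquiv.mul_apply, hhx, hgx]⟩
  inv_mem' := fun ⟨hg, hgx⟩ =>
    ⟨G.inv_mem hg, by rw [← hgx, IsometryEquiv.inv_apply_self, hgx]⟩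

theorem mapsTo_isometryOrbit {G : Subgroup (X ≃ᵢ X)} {g : X ≃ᵢ X} (hg : g ∈ G) (x : X) :
    MapsTo g (isometryOrbit G x) (isometryOrbit G x) := by
  rintro _ ⟨h, hh, rfl⟩
  exact ⟨g * h, G.mul_mem hg hh, rfl⟩

theorem infinite_isometryOrbit_stabilizer [ProperSpace X] {G : Subgroup (X ≃ᵢ X)} {x y : X}
    (hcl : IsClosed (isometryOrbit G x)) (hd : IsDiscrete (isometryOrbit G x))
    {ι : Type*} [Infinite ι] {g : ι → X ≃ᵢ X} (hg : ∀ i, g i ∈ G)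
    (hinj : Function.Injective fun i => g i y) (hbdd : IsBounded (range fun i => g i y)) :
    (isometryOrbit (isometryStabilizer G x) y).Infinite := by
  obtain ⟨r, hr⟩ := (isBounded_iff_subset_closedBall y).mp hbdd
  set F := closedBall y (dist x y + r) ∩ isometryOrbit G x
  have hF : F.Finite := finite_isBounded_inter_isClosed hd isBounded_closedBall hcl
  have hgF : ∀ i, g i x ∈ F := fun i => by
    refine ⟨?_, g i, hg i, rfl⟩
    calc dist (g i x) y ≤ dist (g i x) (g i y) + dist (g i y) y := dist_triangle _ _ _
      _ ≤ dist x y + r := by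
        rw [(g i).dist_eq]
        exact add_le_add_right (mem_closedBall.mp (hr ⟨i, rfl⟩)) _
  have := hF.to_subtype
  -- infinitely many `g i` send `x` to the same point, and then `(g i₀)⁻¹ * g i` fixes `x`
  obtain ⟨p, hp⟩ := Finite.exists_infinite_fiber fun i => (⟨g i x, hgF i⟩ : F)
  have hI := infinite_coe_iff.mp hp
  obtain ⟨i₀, hi₀⟩ := hI.nonempty
  have hfix : ∀ i ∈ (fun i => (⟨g i x, hgF i⟩ : F)) ⁻¹' {p}, g i x = g i₀ x := fun i hi =>
    congrArg Subtype.val (hi.trans hi₀.symm)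
  refine ((hI.image fun i _ j _ hij => hinj ((g i₀)⁻¹.injective hij)).mono ?_)
  rintro _ ⟨i, hi, rfl⟩
  refine ⟨(g i₀)⁻¹ * g i, ⟨G.mul_mem (G.inv_mem (hg i₀)) (hg i), ?_⟩, rfl⟩
  rw [IsometryEquiv.mul_apply, hfix i hi, IsometryEquiv.inv_apply_self]

theorem IsometryEquiv.apply_mem_image_of_eqOn {g h : X ≃ᵢ X} {C : Set X} (hgh : EqOn g h C)
    (y : X) : g y ∈ h '' {w | ∀ c ∈ C, dist w c = dist y c} :=
  ⟨h.symm (g y), fun c hc => by rw [← h.dist_eq, h.apply_symm_apply, ← hgh hc, g.dist_eq],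
    h.apply_symm_apply _⟩

end Orbits

section Geometry

variable {V : Type*} [NormedAddCommGroup V] [InnerProductSpace ℝ V]

theorem vectorSpan_le_orthogonal_of_forall_dist_eq {Z C : Set V}
    (h : ∀ w ∈ Z, ∀ w' ∈ Z, ∀ c ∈ C, dist w c = dist w' c) :
    vectorSpan ℝ Z ≤ (vectorSpan ℝ C)ᗮ := by
  rw [vectorSpan_def, vectorSpan_def, ← Submodule.isOrtho_iff_le, Submodule.isOrtho_span]
  rintro _ ⟨w, hw, w', hw', rfl⟩ _ ⟨c, hc, c', hc', rfl⟩
  rw [real_inner_comm]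
  exact EuclideanGeometry.inner_vsub_vsub_of_dist_eq_of_dist_eq (h w' hw' w hw c' hc')
    (h w' hw' w hw c hc)

-- The points with prescribed distances to `C` lie on a line and on a sphere.
theorem finite_setOf_forall_dist_eq [FiniteDimensional ℝ V] {C : Set V}
    (hC : finrank ℝ V ≤ finrank ℝ (vectorSpan ℝ C) + 1) {c : V} (hc : c ∈ C) (y : V) :
    {w | ∀ x ∈ C, dist w x = dist y x}.Finite := by
  classical
  set Z := {w | ∀ x ∈ C, dist w x = dist y x}
  have hcol : Collinear ℝ Z := by
    rw [collinear_iff_finrank_le_one]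
    have hle := Submodule.finrank_mono (vectorSpan_le_orthogonal_of_forall_dist_eq (Z := Z)
      fun w hw w' hw' x hx => (hw x hx).trans (hw' x hx).symm)
    have := (vectorSpan ℝ C).finrank_add_finrank_orthogonal
    omega
  have hsph : EuclideanGeometry.Cospherical Z := ⟨c, dist y c, fun w hw => hw c hc⟩
  by_contra hinf
  obtain ⟨t, htZ, ht3⟩ := Set.Infinite.exists_subset_card_eq hinf 3
  obtain ⟨a, b, d, hab, had, hbd, rfl⟩ := Finset.card_eq_three.mp ht3
  have hsub : ({a, b, d} : Set V) ⊆ Z := by simpa using htZ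
  exact affineIndependent_iff_not_collinear_set.mp
    ((hsph.subset hsub).affineIndependent_of_ne hab had hbd) (hcol.subset hsub)

theorem finite_isometryOrbit_of_not_collinear [FiniteDimensional ℝ V] (hV : finrank ℝ V = 3)
    {H : Subgroup (V ≃ᵢ V)} {S : Set V} (hcl : IsClosed S) (hd : IsDiscrete S)
    (hHS : ∀ h ∈ H, MapsTo h S S) {x s t : V} (hx : ∀ h ∈ H, h x = x) (hs : s ∈ S) (ht : t ∈ S)
    (hxst : ¬Collinear ℝ {x, s, t}) (y : V) : (isometryOrbit H y).Finite := by
  set F := closedBall x (max (dist s x) (dist t x)) ∩ S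
  have hF : F.Finite := finite_isBounded_inter_isClosed hd isBounded_closedBall hcl
  have hW : {w | ∀ c ∈ ({x, s, t} : Set V), dist w c = dist y c}.Finite := by
    refine finite_setOf_forall_dist_eq ?_ (mem_insert x _) y
    have := mt (collinear_iff_finrank_le_one (k := ℝ)).mpr hxst
    omega
  -- an element of `H` is determined on `{x, s, t}` by the images of `s` and `t`, which lie in `F`
  have hcover : isometryOrbit H y ⊆
      ⋃ q ∈ F ×ˢ F, {w | ∃ h ∈ H, h s = q.1 ∧ h t = q.2 ∧ h y = w} := by
    rintro _ ⟨h, hh, rfl⟩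
    have hdist : ∀ p, dist (h p) x = dist p x := fun p => by rw [← h.dist_eq p x, hx h hh]
    refine mem_biUnion (x := (h s, h t)) ⟨⟨?_, hHS h hh hs⟩, ⟨?_, hHS h hh ht⟩⟩
      ⟨h, hh, rfl, rfl, rfl⟩
    · simp [hdist]
    · simp [hdist]
  refine ((hF.prod hF).biUnion fun q _ => ?_).subset hcover
  rcases eq_empty_or_nonempty {w | ∃ h ∈ H, h s = q.1 ∧ h t = q.2 ∧ h y = w} with hq | hq
  · simp [hq]
  obtain ⟨_, h₀, hh₀, hs₀, ht₀, -⟩ := hq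
  refine (hW.image h₀).subset ?_
  rintro _ ⟨h, hh, hs, ht, rfl⟩
  refine IsometryEquiv.apply_mem_image_of_eqOn ?_ y
  rintro c (rfl | rfl | rfl)
  exacts [(hx h hh).trans (hx h₀ hh₀).symm, hs.trans hs₀.symm, ht.trans ht₀.symm]

end Geometry

section Line

variable {E : Type*} [NormedAddCommGroup E] [NormedSpace ℝ E]

theorem IsometryEquiv.apply_lineMap_eq_or (f : E ≃ᵢ E) {x₀ x₁ : E} (hx : x₀ ≠ x₁) {a b : ℝ}
    (ha : f x₀ = lineMap x₀ x₁ a) (hb : f x₁ = lineMap x₀ x₁ b) :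
    (∀ t : ℝ, f (lineMap x₀ x₁ t) = lineMap x₀ x₁ (a + t)) ∨
      ∀ t : ℝ, f (lineMap x₀ x₁ t) = lineMap x₀ x₁ (a - t) := by
  -- Mazur–Ulam: `f` is affine, so it is determined on the line by `f x₀` and `f x₁`
  have hf : ∀ t : ℝ, f (lineMap x₀ x₁ t) = lineMap x₀ x₁ (t * (b - a) + a) := fun t => by
    rw [← f.coeFn_toRealAffineIsometryEquiv, ← AffineIsometryEquiv.coe_toAffineEquiv,
      AffineEquiv.apply_lineMap, AffineIsometryEquiv.coe_toAffineEquiv,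
      f.coeFn_toRealAffineIsometryEquiv, ha, hb, ← apply_lineMap, lineMap_apply_ring']
  have hba : |b - a| = 1 := by
    have := f.dist_eq x₀ x₁
    rw [ha, hb, dist_lineMap_lineMap, Real.dist_eq, abs_sub_comm] at this
    exact (mul_eq_right₀ (dist_ne_zero.mpr hx)).mp this
  rcases abs_eq (zero_le_one' ℝ) |>.mp hba with h | h
  · exact Or.inl fun t => by rw [hf, h]; ring_nf
  · exact Or.inr fun t => by rw [hf, h]; ring_nf

variable (G : Subgroup (E ≃ᵢ E)) (x₀ x₁ : E)

def lineTranslations : AddSubgroup ℝ where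
  carrier := {a | ∃ g ∈ G, ∀ t : ℝ, g (lineMap x₀ x₁ t) = lineMap x₀ x₁ (a + t)}
  zero_mem' := ⟨1, G.one_mem, fun t => by rw [zero_add]; rfl⟩
  add_mem' := fun ⟨g, hg, hga⟩ ⟨h, hh, hhb⟩ =>
    ⟨g * h, G.mul_mem hg hh, fun t => by rw [IsometryEquiv.mul_apply, hhb, hga, add_assoc]⟩
  neg_mem' := fun {a} ⟨g, hg, hga⟩ => ⟨g⁻¹, G.inv_mem hg, fun t => by
    rw [← g.inv_apply_self (lineMap x₀ x₁ (-a + t)), hga, add_neg_cancel_left]⟩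

def lineReflections : Set ℝ :=
  {r | ∃ g ∈ G, ∀ t : ℝ, g (lineMap x₀ x₁ t) = lineMap x₀ x₁ (r - t)}

variable {G x₀ x₁}

theorem sub_mem_lineTranslations {r r' : ℝ} (hr : r ∈ lineReflections G x₀ x₁)
    (hr' : r' ∈ lineReflections G x₀ x₁) : r - r' ∈ lineTranslations G x₀ x₁ := by
  obtain ⟨g, hg, hgr⟩ := hr
  obtain ⟨h, hh, hhr⟩ := hr'
  exact ⟨g * h, G.mul_mem hg hh, fun t => by
    rw [IsometryEquiv.mul_apply, hhr, hgr]; congr 1; ring⟩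

theorem sub_mem_lineReflections {r a : ℝ} (hr : r ∈ lineReflections G x₀ x₁)
    (ha : a ∈ lineTranslations G x₀ x₁) : r - a ∈ lineReflections G x₀ x₁ := by
  obtain ⟨g, hg, hgr⟩ := hr
  obtain ⟨h, hh, hha⟩ := ha
  exact ⟨g * h, G.mul_mem hg hh, fun t => by
    rw [IsometryEquiv.mul_apply, hha, hgr]; congr 1; ring⟩

theorem preimage_lineMap_isometryOrbit (hx : x₀ ≠ x₁)
    (hline : isometryOrbit G x₀ ⊆ range (lineMap x₀ x₁ : ℝ → E)) (hx₁ : x₁ ∈ isometryOrbit G x₀) :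
    lineMap x₀ x₁ ⁻¹' isometryOrbit G x₀ =
      (lineTranslations G x₀ x₁ : Set ℝ) ∪ lineReflections G x₀ x₁ := by
  ext a
  constructor
  · rintro ⟨g, hg, hga⟩
    obtain ⟨b, hb⟩ := hline (mapsTo_isometryOrbit hg x₀ hx₁)
    rcases g.apply_lineMap_eq_or hx hga hb.symm with h | h
    · exact Or.inl ⟨g, hg, h⟩
    · exact Or.inr ⟨g, hg, h⟩
  · rintro (⟨g, hg, hga⟩ | ⟨g, hg, hga⟩)
    · exact ⟨g, hg, by simpa using hga 0⟩
    · exact ⟨g, hg, by simpa using hga 0⟩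

theorem not_dense_lineTranslations (hx : x₀ ≠ x₁) (hacc : ¬AccPt x₀ (𝓟 (isometryOrbit G x₀))) :
    ¬Dense (lineTranslations G x₀ x₁ : Set ℝ) := by
  intro hdense
  have h0 : AccPt (0 : ℝ) (𝓟 (lineTranslations G x₀ x₁)) :=
    accPt_principal_iff_nhdsWithin.mpr
      (mem_closure_iff_nhdsWithin_neBot.mp (hdense.sdiff_singleton 0 0))
  refine hacc ?_
  have := h0.map lineMap_continuous.continuousAt (lineMap_injective ℝ hx)
  rw [map_principal, lineMap_apply_zero] at this
  refine this.mono (principal_mono.mpr ?_)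
  rintro _ ⟨a, ⟨g, hg, hga⟩, rfl⟩
  exact ⟨g, hg, by simpa using hga 0⟩

end Line

section Shapes

def IsPointPairOrPeriodicLines {E : Type*} [AddCommGroup E] [Module ℝ E] (S : Set E) : Prop :=
  (∃ a : E, S = {a}) ∨
  (∃ a b : E, a ≠ b ∧ S = {a, b}) ∨
  (∃ e c : E, e ≠ 0 ∧ S = {p : E | ∃ i : ℤ, p = (i : ℝ) • e + c}) ∨
  (∃ (e c : E) (lam : ℝ), e ≠ 0 ∧ (∀ i : ℤ, lam ≠ (i : ℝ)) ∧
    S = {p : E | ∃ i : ℤ, p = (i : ℝ) • e + c} ∪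
        {p : E | ∃ i : ℤ, p = ((i : ℝ) + lam) • e + c})

variable {E F : Type*} [AddCommGroup E] [Module ℝ E] [AddCommGroup F] [Module ℝ F]

theorem AffineMap.image_setOf_smul_add (f : E →ᵃ[ℝ] F) (u : ℤ → ℝ) (e c : E) :
    f '' {p | ∃ i : ℤ, p = u i • e + c} = {q | ∃ i : ℤ, q = u i • f.linear e + f c} := by
  ext q
  constructor
  · rintro ⟨_, ⟨i, rfl⟩, rfl⟩
    exact ⟨i, by rw [← vadd_eq_add, f.map_vadd, map_smul, vadd_eq_add]⟩
  · rintro ⟨i, rfl⟩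
    exact ⟨_, ⟨i, rfl⟩, by rw [← vadd_eq_add, f.map_vadd, map_smul, vadd_eq_add]⟩

theorem IsPointPairOrPeriodicLines.image {S : Set E} (hS : IsPointPairOrPeriodicLines S)
    (f : E →ᵃ[ℝ] F) (hf : Function.Injective f) : IsPointPairOrPeriodicLines (f '' S) := by
  have hlin : ∀ e ≠ (0 : E), f.linear e ≠ 0 := fun e he =>
    (map_ne_zero_iff _ ((f.linear_injective_iff).mpr hf)).mpr he
  rcases hS with ⟨a, rfl⟩ | ⟨a, b, hab, rfl⟩ | ⟨e, c, he, rfl⟩ | ⟨e, c, lam, he, hlam, rfl⟩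
  · exact Or.inl ⟨f a, image_singleton⟩
  · exact Or.inr <| Or.inl ⟨f a, f b, hf.ne hab, image_pair f a b⟩
  · exact Or.inr <| Or.inr <| Or.inl ⟨f.linear e, f c, hlin e he,
      f.image_setOf_smul_add (fun i => (i : ℝ)) e c⟩
  · refine Or.inr <| Or.inr <| Or.inr ⟨f.linear e, f c, lam, hlin e he, hlam, ?_⟩
    rw [image_union, f.image_setOf_smul_add (fun i => (i : ℝ)),
      f.image_setOf_smul_add (fun i => (i : ℝ) + lam)]

theorem isPointPairOrPeriodicLines_zmultiples (α : ℝ) :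
    IsPointPairOrPeriodicLines (AddSubgroup.zmultiples α : Set ℝ) := by
  rcases eq_or_ne α 0 with rfl | hα
  · exact Or.inl ⟨0, by simp⟩
  · refine Or.inr <| Or.inr <| Or.inl ⟨α, 0, hα, ?_⟩
    ext p
    simp [AddSubgroup.mem_zmultiples_iff, eq_comm]

theorem isPointPairOrPeriodicLines_union {A : AddSubgroup ℝ} (hA : ¬Dense (A : Set ℝ)) {R : Set ℝ}
    (hRR : ∀ r ∈ R, ∀ r' ∈ R, r - r' ∈ A) (hRA : ∀ r ∈ R, ∀ a ∈ A, r - a ∈ R) :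
    IsPointPairOrPeriodicLines ((A : Set ℝ) ∪ R) := by
  obtain ⟨α, rfl⟩ : ∃ α, A = AddSubgroup.zmultiples α := by
    simpa only [AddSubgroup.zmultiples_eq_closure] using A.dense_or_cyclic.resolve_left hA
  by_cases hRA' : R ⊆ AddSubgroup.zmultiples α
  · rw [union_eq_left.mpr hRA']
    exact isPointPairOrPeriodicLines_zmultiples α
  obtain ⟨r₀, hr₀R, hr₀A⟩ := not_subset.mp hRA'
  have hR : ∀ r, r ∈ R ↔ ∃ i : ℤ, r = r₀ + i * α := fun r => by
    refine ⟨fun hr => ?_, ?_⟩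
    · obtain ⟨i, hi⟩ := AddSubgroup.mem_zmultiples_iff.mp (hRR r hr r₀ hr₀R)
      exact ⟨i, by rw [← zsmul_eq_mul, hi]; ring⟩
    · rintro ⟨i, rfl⟩
      simpa using hRA r₀ hr₀R (-i • α) (AddSubgroup.zsmul_mem_zmultiples α (-i))
  rcases eq_or_ne α 0 with rfl | hα
  · refine Or.inr <| Or.inl ⟨0, r₀, fun h => hr₀A (h ▸ zero_mem _), ?_⟩
    ext r
    simp [hR]
  · refine Or.inr <| Or.inr <| Or.inr ⟨α, 0, r₀ / α, hα, fun i hi => hr₀A ?_, ?_⟩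
    · exact AddSubgroup.mem_zmultiples_iff.mpr
        ⟨i, by rw [zsmul_eq_mul, ← hi, div_mul_cancel₀ r₀ hα]⟩
    · have hshift : ∀ i : ℤ, ((i : ℝ) + r₀ / α) * α = r₀ + i * α := fun i => by
        field_simp; ring
      ext p
      simp [AddSubgroup.mem_zmultiples_iff, hR, hshift, eq_comm]

end Shapes

/-- Proposition 1: a discrete subset `S` of ℝ³ which is the orbit of a point
under a non-discrete group of isometries is a single point, a pair of points, a
periodic line of points `{i·e + c : i ∈ ℤ}`, or the union of two interleaved
periodic lines `{i·e + c} ∪ {(i+λ)·e + c}` with `λ ∉ ℤ`. -/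
theorem discrete_orbit_of_nondiscrete_group_classification
    (G : Subgroup (E3 ≃ᵢ E3)) (x₁ : E3)
    (S : Set E3) (hS : S = {y : E3 | ∃ g ∈ G, g x₁ = y})
    (hdisc : ∀ z : E3, ¬ AccPt z (𝓟 S))
    (hnondisc : ∃ (y : E3) (g : ℕ → E3 ≃ᵢ E3) (z : E3),
      (∀ i, g i ∈ G) ∧ Function.Injective (fun i => g i y) ∧
      Tendsto (fun i => g i y) atTop (nhds z)) :
    (∃ a : E3, S = {a}) ∨
    (∃ a b : E3, a ≠ b ∧ S = {a, b}) ∨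
    (∃ e c : E3, e ≠ 0 ∧ S = {p : E3 | ∃ i : ℤ, p = (i : ℝ) • e + c}) ∨
    (∃ (e c : E3) (lam : ℝ), e ≠ 0 ∧ (∀ i : ℤ, lam ≠ (i : ℝ)) ∧
      S = {p : E3 | ∃ i : ℤ, p = (i : ℝ) • e + c} ∪
          {p : E3 | ∃ i : ℤ, p = ((i : ℝ) + lam) • e + c}) := by
  obtain rfl : S = isometryOrbit G x₁ := hS
  obtain ⟨y, g, z, hg, hinj, hz⟩ := hnondisc
  obtain ⟨hcl, hd⟩ := isClosed_and_discrete_iff.mpr fun z =>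
    disjoint_iff.mpr (not_neBot.mp (hdisc z))
  have hstab := infinite_isometryOrbit_stabilizer hcl hd hg hinj (isBounded_range_of_tendsto _ hz)
  have hcol : ∀ s ∈ isometryOrbit G x₁, ∀ t ∈ isometryOrbit G x₁, Collinear ℝ {x₁, s, t} :=
    fun s hs t ht => by_contra fun h => hstab <| finite_isometryOrbit_of_not_collinear
      (H := isometryStabilizer G x₁) finrank_euclideanSpace_fin hcl hd
      (fun k hk => mapsTo_isometryOrbit hk.1 x₁) (fun k hk => hk.2) hs ht h y
  have hx₁ : x₁ ∈ isometryOrbit G x₁ := ⟨1, G.one_mem, rfl⟩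
  rcases eq_singleton_or_nontrivial hx₁ with h | h
  · exact Or.inl ⟨x₁, h⟩
  obtain ⟨s₀, hs₀, hne⟩ := h.exists_ne x₁
  have hline : isometryOrbit G x₁ ⊆ range (lineMap x₁ s₀ : ℝ → E3) := fun s hs =>
    mem_affineSpan_pair_iff_exists_lineMap_eq.mp
      ((hcol s₀ hs₀ s hs).mem_affineSpan_of_mem_of_ne (by simp) (by simp) (by simp) hne.symm)
  have hshape := isPointPairOrPeriodicLines_union (not_dense_lineTranslations hne.symm (hdisc x₁))
    (fun _ hr _ => sub_mem_lineTranslations hr) (fun _ hr _ => sub_mem_lineReflections hr)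
  rw [← image_preimage_eq_of_subset hline, preimage_lineMap_isometryOrbit hne.symm hline hs₀]
  exact hshape.image _ (lineMap_injective ℝ hne.symm)
end
end

section
/- Let S ⊂ ℝ³ be a discrete set of collinear points with at least 3 points, such that S is an objective atomic structure (each point sees the same environment up to orthogonal transformation). Then S is of the form {i·e + c : i ∈ ℤ} or {i·e + c : i ∈ ℤ} ∪ {(i+λ)·e + c : i ∈ ℤ} with 0 < λ < 1, i.e., S is invariant under translation by some nonzero vector e. -/
/-!
Parametrize the line of `S` as `t ↦ t • v + x₁` and pull `S` back to a discrete set `T ⊆ ℝ`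
containing `0`. A linear isometry mapping the direction of a line into that line sends `v` to
`± v`, so objectivity says that every `t ∈ T` is either a period of `T` (`T = t + T`) or a centre
of symmetry (`T = t - T`). Two centres of symmetry differ by a period, and discreteness makes the
group of periods `d ℤ` with `d > 0` as soon as it is nontrivial, which three points guarantee.
Hence `T = d ℤ`, or `T = d ℤ ∪ (c + d ℤ)` for a centre of symmetry `c` that is not a period.
-/

open Filter

noncomputable section

open Set Function Pointwise AddAction

lemma Set.two_lt_encard_of_ne {α : Type*} {s : Set α} {a b c : α} (ha : a ∈ s) (hb : b ∈ s)
    (hc : c ∈ s) (hab : a ≠ b) (hac : a ≠ c) (hbc : b ≠ c) : 2 < s.encard :=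
  calc (2 : ℕ∞) < 3 := by norm_num
    _ = ({a, b, c} : Set α).encard := (encard_eq_three.2 ⟨a, b, c, hab, hac, hbc, rfl⟩).symm
    _ ≤ s.encard := encard_le_encard (by simp [insert_subset_iff, ha, hb, hc])

lemma Set.nontrivial_diff_singleton_of_two_lt_encard {α : Type*} {s : Set α} (hs : 2 < s.encard)
    (a : α) : (s \ {a}).Nontrivial := by
  rw [← one_lt_encard_iff_nontrivial]
  have h := encard_le_encard_sdiff_add_encard s {a}
  rw [encard_singleton] at h
  by_contra! h'
  exact absurd (hs.trans_le (h.trans (by gcongr : (s \ {a}).encard + 1 ≤ 1 + 1))) (by norm_num)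

lemma not_accPt_preimage {X Y : Type*} [TopologicalSpace X] [TopologicalSpace Y] {f : X → Y}
    {z : X} (hf : ContinuousAt f z) (hinj : Injective f) {S : Set Y} (h : ¬AccPt (f z) (𝓟 S)) :
    ¬AccPt z (𝓟 (f ⁻¹' S)) := fun hz =>
  h <| (hz.map hf hinj).mono <| by
    rw [map_principal]
    exact principal_mono.2 (image_preimage_subset f S)

lemma AddSubgroup.exists_pos_eq_zmultiples_of_not_accPt {H : AddSubgroup ℝ} (hbot : H ≠ ⊥)
    (hacc : ¬AccPt 0 (𝓟 (H : Set ℝ))) : ∃ d > 0, H = zmultiples d := by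
  obtain ⟨ε, hε, hdisj⟩ : ∃ ε > 0, Disjoint (H : Set ℝ) (Ioo 0 ε) := by
    rw [accPt_iff_nhds] at hacc
    push Not at hacc
    obtain ⟨U, hU, hUH⟩ := hacc
    obtain ⟨ε, hε, hball⟩ := Metric.mem_nhds_iff.1 hU
    refine ⟨ε, hε, disjoint_left.2 fun y hy hyε => hyε.1.ne' (hUH y ⟨hball ?_, hy⟩)⟩
    rw [Metric.mem_ball, Real.dist_0_eq_abs, abs_of_pos hyε.1]
    exact hyε.2
  obtain ⟨d, hd⟩ := exists_isLeast_pos hbot hε hdisj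
  exact ⟨d, hd.1.2, (cyclic_of_min hd).trans (zmultiples_eq_closure d).symm⟩

lemma AddSubgroup.coe_zmultiples_eq_range {R : Type*} [Ring R] (d : R) :
    (zmultiples d : Set R) = range fun i : ℤ => (i : R) * d := by
  ext
  simp [mem_zmultiples_iff, zsmul_eq_mul]

lemma AddSubgroup.vadd_zmultiples_eq_range {d : ℝ} (hd : d ≠ 0) (c : ℝ) :
    c +ᵥ (zmultiples d : Set ℝ) = range fun i : ℤ => ((i : ℝ) + Int.fract (c / d)) * d := by
  have hc : c = (⌊c / d⌋ + Int.fract (c / d)) * d := by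
    rw [Int.floor_add_fract, div_mul_cancel₀ c hd]
  rw [coe_zmultiples_eq_range, ← image_vadd, ← range_comp]
  ext x
  constructor
  · rintro ⟨i, rfl⟩
    exact ⟨i + ⌊c / d⌋, by simp only [comp_apply, vadd_eq_add]; push_cast; linear_combination -hc⟩
  · rintro ⟨i, rfl⟩
    exact ⟨i - ⌊c / d⌋, by simp only [comp_apply, vadd_eq_add]; push_cast; linear_combination hc⟩

section RealSymmetry

variable {T : Set ℝ}

lemma coe_stabilizer_subset_of_zero_mem (h0 : (0 : ℝ) ∈ T) :
    (stabilizer ℝ T : Set ℝ) ⊆ T := fun d hd => by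
  simpa using (mem_stabilizer_set.1 hd 0).2 h0

lemma mem_stabilizer_of_image_add_eq {t : ℝ} (h : (t + ·) '' T = T) : t ∈ stabilizer ℝ T :=
  mem_stabilizer_iff.2 (by rw [← image_vadd]; exact h)

lemma sub_mem_stabilizer_of_image_sub_eq {t₁ t₂ : ℝ} (h₁ : (t₁ - ·) '' T = T)
    (h₂ : (t₂ - ·) '' T = T) : t₁ - t₂ ∈ stabilizer ℝ T := by
  refine mem_stabilizer_of_image_add_eq ?_
  calc (t₁ - t₂ + ·) '' T = (t₁ - ·) '' ((t₂ - ·) '' T) := by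
        rw [image_image]; congr 1; funext s; ring
    _ = T := by rw [h₂, h₁]

lemma stabilizer_ne_bot_of_nontrivial (hT : (T \ {0}).Nontrivial)
    (hsym : ∀ t ∈ T, (t + ·) '' T = T ∨ (t - ·) '' T = T) : stabilizer ℝ T ≠ ⊥ := by
  obtain ⟨a, ⟨ha, ha0⟩, b, ⟨hb, hb0⟩, hab⟩ := hT
  refine AddSubgroup.ne_bot_iff_exists_ne_zero.2 ?_
  rcases hsym a ha with ha' | ha'
  · exact ⟨⟨a, mem_stabilizer_of_image_add_eq ha'⟩, fun h => ha0 (congrArg Subtype.val h)⟩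
  rcases hsym b hb with hb' | hb'
  · exact ⟨⟨b, mem_stabilizer_of_image_add_eq hb'⟩, fun h => hb0 (congrArg Subtype.val h)⟩
  · exact ⟨⟨a - b, sub_mem_stabilizer_of_image_sub_eq ha' hb'⟩,
      fun h => hab (sub_eq_zero.1 (congrArg Subtype.val h))⟩

lemma eq_stabilizer_or_eq_union_vadd (h0 : (0 : ℝ) ∈ T)
    (hsym : ∀ t ∈ T, (t + ·) '' T = T ∨ (t - ·) '' T = T) :
    T = stabilizer ℝ T ∨ ∃ c ∉ stabilizer ℝ T,
      T = (stabilizer ℝ T : Set ℝ) ∪ (c +ᵥ (stabilizer ℝ T : Set ℝ)) := by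
  set P := stabilizer ℝ T
  have reflect : ∀ c ∈ T, c ∉ P → (c - ·) '' T = T := fun c hc hcP =>
    (hsym c hc).resolve_left (mt mem_stabilizer_of_image_add_eq hcP)
  by_cases hTP : T ⊆ P
  · exact Or.inl (hTP.antisymm (coe_stabilizer_subset_of_zero_mem h0))
  obtain ⟨c, hc, hcP⟩ := not_subset.1 hTP
  refine Or.inr ⟨c, hcP, subset_antisymm (fun t ht => ?_) ?_⟩
  · by_cases htP : t ∈ P
    · exact Or.inl htP
    · refine Or.inr ⟨t - c, ?_, by simp [vadd_eq_add]⟩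
      exact sub_mem_stabilizer_of_image_sub_eq (reflect t ht htP) (reflect c hc hcP)
  · rintro _ (hp | ⟨p, hp, rfl⟩)
    · exact coe_stabilizer_subset_of_zero_mem h0 hp
    · simpa [add_comm] using (mem_stabilizer_set.1 hp c).2 hc

theorem exists_eq_range_or_eq_range_union (h0 : (0 : ℝ) ∈ T) (hacc : ¬AccPt 0 (𝓟 T))
    (hT : (T \ {0}).Nontrivial) (hsym : ∀ t ∈ T, (t + ·) '' T = T ∨ (t - ·) '' T = T) :
    ∃ d > 0, (∀ s ∈ T, s + d ∈ T) ∧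
      (T = range (fun i : ℤ => (i : ℝ) * d) ∨
        ∃ lam, 0 < lam ∧ lam < 1 ∧
          T = range (fun i : ℤ => (i : ℝ) * d) ∪ range fun i : ℤ => ((i : ℝ) + lam) * d) := by
  obtain ⟨d, hd, hP⟩ := AddSubgroup.exists_pos_eq_zmultiples_of_not_accPt
    (stabilizer_ne_bot_of_nontrivial hT hsym)
    fun h => hacc (h.mono (principal_mono.2 (coe_stabilizer_subset_of_zero_mem h0)))
  refine ⟨d, hd, fun s hs => ?_, ?_⟩
  · have hdP : d ∈ stabilizer ℝ T := hP ▸ AddSubgroup.mem_zmultiples d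
    simpa [add_comm] using (mem_stabilizer_set.1 hdP s).2 hs
  rcases eq_stabilizer_or_eq_union_vadd h0 hsym with h | ⟨c, hcP, h⟩
  · exact Or.inl (h.trans (by rw [hP, AddSubgroup.coe_zmultiples_eq_range]))
  refine Or.inr ⟨Int.fract (c / d), Int.fract_pos.2 fun hcd => hcP ?_, Int.fract_lt_one _,
    h.trans ?_⟩
  · rw [hP, AddSubgroup.mem_zmultiples_iff]
    exact ⟨⌊c / d⌋, by rw [zsmul_eq_mul, ← hcd, div_mul_cancel₀ c hd.ne']⟩
  · rw [hP, AddSubgroup.vadd_zmultiples_eq_range hd.ne', AddSubgroup.coe_zmultiples_eq_range]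

end RealSymmetry

section Line

variable {E : Type*} [NormedAddCommGroup E] [NormedSpace ℝ E] {v x₀ : E}

def lineParam (v x₀ : E) (t : ℝ) : E := t • v + x₀

@[simp] lemma lineParam_zero : lineParam v x₀ 0 = x₀ := by simp [lineParam]

lemma lineParam_add (s t : ℝ) : lineParam v x₀ (s + t) = lineParam v x₀ s + t • v := by
  simp only [lineParam, add_smul]
  abel

lemma lineParam_injective (hv : v ≠ 0) : Injective (lineParam v x₀) := fun _ _ h =>
  smul_left_injective ℝ hv (add_right_cancel h)

lemma continuous_lineParam : Continuous (lineParam v x₀) := by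
  unfold lineParam
  fun_prop

lemma ne_zero_of_subset_range_lineParam {S : Set E} (hS : S ⊆ range (lineParam v x₀)) {a b : E}
    (ha : a ∈ S) (hb : b ∈ S) (hab : a ≠ b) : v ≠ 0 := by
  rintro rfl
  obtain ⟨_, rfl⟩ := hS ha
  obtain ⟨_, rfl⟩ := hS hb
  simp [lineParam] at hab

lemma image_lineParam_range_mul (g : ℤ → ℝ) (d : ℝ) :
    lineParam v x₀ '' range (fun i => g i * d) = {p | ∃ i : ℤ, p = g i • (d • v) + x₀} := by
  ext
  simp [← range_comp, lineParam, mul_smul, eq_comm]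

lemma LinearIsometry.eq_one_or_eq_neg_one_of_apply_eq_smul (Q : E →ₗᵢ[ℝ] E) (hv : v ≠ 0) {a : ℝ}
    (h : Q v = a • v) : a = 1 ∨ a = -1 := by
  have hnorm := Q.norm_map v
  rw [h, norm_smul, Real.norm_eq_abs, mul_eq_right₀ (norm_ne_zero_iff.2 hv)] at hnorm
  exact (abs_eq zero_le_one).1 hnorm

lemma exists_apply_eq_smul_of_mapsTo {S : Set E} {T : Set ℝ} (hST : lineParam v x₀ '' T = S)
    (Q : E →ₗᵢ[ℝ] E) {s t : ℝ} (hs : s ∈ T) (hs0 : s ≠ 0)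
    (hQ : MapsTo (fun y => Q (y - x₀) + lineParam v x₀ t) S S) : ∃ a : ℝ, Q v = a • v := by
  obtain ⟨u, -, hu⟩ := hST.symm ▸ hQ (hST ▸ mem_image_of_mem _ hs)
  refine ⟨(u - t) / s, ?_⟩
  have hsQ : s • Q v = (u - t) • v := by
    simp only [lineParam, add_sub_cancel_right, map_smul] at hu
    rw [sub_smul]
    linear_combination (norm := module) -hu
  rw [div_eq_inv_mul, mul_smul, ← hsQ, inv_smul_smul₀ hs0]

lemma comp_lineParam_eq (Q : E →ₗᵢ[ℝ] E) {a : ℝ} (ha : Q v = a • v) (t : ℝ) :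
    (fun y => Q (y - x₀) + lineParam v x₀ t) ∘ lineParam v x₀ = lineParam v x₀ ∘ (t + a * ·) := by
  funext w
  simp only [comp_apply, lineParam, add_sub_cancel_right, map_smul, ha]
  module

lemma image_add_or_sub_eq_of_image_eq {S : Set E} {T : Set ℝ} (hv : v ≠ 0)
    (hST : lineParam v x₀ '' T = S) {s : ℝ} (hs : s ∈ T) (hs0 : s ≠ 0) (Q : E ≃ₗᵢ[ℝ] E) {t : ℝ}
    (hQ : (fun y => Q (y - x₀) + lineParam v x₀ t) '' S = S) :
    (t + ·) '' T = T ∨ (t - ·) '' T = T := by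
  obtain ⟨a, ha⟩ := exists_apply_eq_smul_of_mapsTo hST Q.toLinearIsometry hs hs0
    (mapsTo_iff_image_subset.2 hQ.subset)
  have hT : (t + a * ·) '' T = T := image_injective.2 (lineParam_injective hv) <| by
    rw [image_image, ← comp_def, ← comp_lineParam_eq Q.toLinearIsometry ha, image_comp, hST]
    exact hQ
  rcases Q.toLinearIsometry.eq_one_or_eq_neg_one_of_apply_eq_smul hv ha with rfl | rfl
  · left
    simpa using hT
  · right
    simpa [← sub_eq_add_neg] using hT

end Line

/-- A discrete collinear objective atomic structure `S ⊆ ℝ³` with at least three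
points is a periodic line of points `{i·e + c : i ∈ ℤ}` or the union of two
interleaved periodic lines `{i·e + c} ∪ {(i+λ)·e + c}`, `0 < λ < 1`; in
particular `S` is invariant under translation by a nonzero vector `e`. -/
theorem collinear_objective_structure_is_periodic
    (S : Set E3) (x₁ : E3) (hx₁ : x₁ ∈ S)
    (hcol : Collinear ℝ S)
    (hdisc : ∀ z : E3, ¬ AccPt z (𝓟 S))
    (hcard : ∃ a ∈ S, ∃ b ∈ S, ∃ c ∈ S, a ≠ b ∧ a ≠ c ∧ b ≠ c)
    (hobj : ∀ x ∈ S, ∃ Q : E3 ≃ₗᵢ[ℝ] E3, (fun y => Q (y - x₁) + x) '' S = S) :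
    ((∃ e c : E3, e ≠ 0 ∧ S = {p : E3 | ∃ i : ℤ, p = (i : ℝ) • e + c}) ∨
     (∃ (e c : E3) (lam : ℝ), e ≠ 0 ∧ 0 < lam ∧ lam < 1 ∧
       S = {p : E3 | ∃ i : ℤ, p = (i : ℝ) • e + c} ∪
           {p : E3 | ∃ i : ℤ, p = ((i : ℝ) + lam) • e + c})) ∧
    ∃ e : E3, e ≠ 0 ∧ ∀ s ∈ S, s + e ∈ S := by
  obtain ⟨v, hv⟩ := (collinear_iff_of_mem hx₁).1 hcol
  have hline : S ⊆ range (lineParam v x₁) := fun p hp => (hv p hp).imp fun _ h => h.symm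
  obtain ⟨a, ha, b, hb, c, hc, hab, hac, hbc⟩ := hcard
  have hv0 : v ≠ 0 := ne_zero_of_subset_range_lineParam hline ha hb hab
  set T := lineParam v x₁ ⁻¹' S
  have hST : lineParam v x₁ '' T = S := image_preimage_eq_of_subset hline
  have hT : (T \ {0}).Nontrivial := by
    refine nontrivial_diff_singleton_of_two_lt_encard ?_ 0
    rw [← (lineParam_injective hv0).encard_image, hST]
    exact two_lt_encard_of_ne ha hb hc hab hac hbc
  obtain ⟨s, hs, hs0⟩ := hT.nonempty
  have hacc : ¬AccPt 0 (𝓟 T) :=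
    not_accPt_preimage continuous_lineParam.continuousAt (lineParam_injective hv0)
      (by simpa using hdisc x₁)
  obtain ⟨d, hd, hper, hshape⟩ := exists_eq_range_or_eq_range_union (by simpa [T]) hacc hT
    fun t ht => by
      obtain ⟨Q, hQ⟩ := hobj _ ht
      exact image_add_or_sub_eq_of_image_eq hv0 hST hs hs0 Q hQ
  have he : d • v ≠ 0 := smul_ne_zero hd.ne' hv0
  refine ⟨?_, d • v, he, ?_⟩
  · rcases hshape with h | ⟨lam, hlam0, hlam1, h⟩
    · exact Or.inl ⟨d • v, x₁, he, by rw [← hST, h, image_lineParam_range_mul (fun i => (i : ℝ))]⟩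
    · refine Or.inr ⟨d • v, x₁, lam, he, hlam0, hlam1, ?_⟩
      rw [← hST, h, image_union, image_lineParam_range_mul (fun i => (i : ℝ)),
        image_lineParam_range_mul (fun i => (i : ℝ) + lam)]
  · rw [← hST]
    rintro _ ⟨u, hu, rfl⟩
    exact ⟨u + d, hper u hu, lineParam_add u d⟩
end
end
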